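/- arXiv:2109.04805 — 2 statements merged into one kernel-verified Lean document; each statement's English description precedes it below -/
import Mathlib

section
/- Let X be a set, F a field, d a positive integer, and f : X → F^d linearly independent (the component functions f_0,...,f_{d-1} are linearly independent in the F-vector space of functions X → F). Then both the VC-dimension and the Littlestone dimension of the family C_f = {Z_{f,a} : a ∈ F^d, a ≠ 0} equal d − 1. -/
/-- The zero set of the linear combination of the components of `f` with coefficients `a`. -/
def zeroSet {X F : Type*} [Field F] {d : ℕ} (f : X → Fin d → F) (a : Fin d → F) : Set X :=
  {c | ∑ i, a i * f c i = 0}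

/-- The family of zero sets of nontrivial linear combinations of the components of `f`. -/
def zeroSets {X F : Type*} [Field F] {d : ℕ} (f : X → Fin d → F) : Set (Set X) :=
  {s | ∃ a : Fin d → F, a ≠ 0 ∧ s = zeroSet f a}

/-- A family of sets `C` shatters `Y` if every subset of `Y` is the trace of a member of `C`. -/
def ShattersSet {X : Type*} (C : Set (Set X)) (Y : Set X) : Prop :=
  ∀ Z ⊆ Y, ∃ A ∈ C, A ∩ Y = Z

/-- The leaf `τ` of a binary tree of depth `n` with node labels `t` and leaf label `A`
is well-labeled. -/
def WellLabeledLeaf {X : Type*} (n : ℕ) (t : (k : ℕ) → (Fin k → Bool) → X)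
    (A : Set X) (τ : Fin n → Bool) : Prop :=
  ∀ k : Fin n, (t k.val (fun j : Fin k.val => τ (Fin.castLE k.isLt.le j)) ∈ A) ↔ τ k = true

/-- There is an `(X, C)`-labeled tree of depth `n` all of whose leaves are well-labeled. -/
def HasWellLabeledTree {X : Type*} (C : Set (Set X)) (n : ℕ) : Prop :=
  ∃ (t : (k : ℕ) → (Fin k → Bool) → X) (L : (Fin n → Bool) → Set X),
    (∀ τ, L τ ∈ C) ∧ ∀ τ, WellLabeledLeaf n t (L τ) τ

/-!
Linear independence of the components gives points `x i` with `f (x i)` a basis of `F^d`, so the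
values `a ⬝ᵥ f (x i)` can be prescribed at will: prescribing `0`/`1` on all but one point and `1`
on the last one (which keeps `a ≠ 0`) shatters `d - 1` points. Conversely, at the root `x` of a
well-labeled tree whose leaves are zero sets of vectors in a subspace `W`, the `true` subtree
lives in `W ⊓ (f x)ᗮ` and the `false` subtree shows that this subspace is proper, so by induction
the depth is less than `finrank W ≤ d`. A shattered set yields a tree of the same depth, which
transfers each bound to the other dimension.
-/

section

open Module Matrix Submodule

variable {X F : Type*}

section Trees

variable {C C' : Set (Set X)} {n : ℕ}

theorem HasWellLabeledTree.mono (h : HasWellLabeledTree C n) (hCC' : C ⊆ C') :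
    HasWellLabeledTree C' n :=
  let ⟨t, L, hLC, hL⟩ := h
  ⟨t, L, fun τ => hCC' (hLC τ), hL⟩

theorem HasWellLabeledTree.nonempty (h : HasWellLabeledTree C n) : C.Nonempty :=
  let ⟨_, L, hLC, _⟩ := h
  ⟨L fun _ => true, hLC _⟩

theorem HasWellLabeledTree.exists_subtrees (h : HasWellLabeledTree C (n + 1)) :
    ∃ x, ∀ b : Bool, HasWellLabeledTree {A ∈ C | x ∈ A ↔ b = true} n := by
  obtain ⟨t, L, hLC, hL⟩ := h
  refine ⟨t 0 Fin.elim0, fun b => ⟨fun k σ => t (k + 1) (Fin.cons b σ),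
    fun τ => L (Fin.cons b τ), fun τ => ⟨hLC _, ?_⟩, fun τ k => ?_⟩⟩
  · simpa [Subsingleton.elim _ (Fin.elim0 : Fin 0 → Bool)] using hL (Fin.cons b τ) 0
  · have hcons : (fun j : Fin (k + 1) =>
        (Fin.cons b τ : Fin (n + 1) → Bool) (Fin.castLE k.succ.isLt.le j)) =
          Fin.cons b fun j : Fin k => τ (Fin.castLE k.isLt.le j) := by
      funext j
      exact Fin.cases rfl (fun _ => rfl) j
    simpa [hcons] using hL (Fin.cons b τ) k.succ

theorem ShattersSet.hasWellLabeledTree_card [Nonempty X] {Y : Finset X} (h : ShattersSet C Y) :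
    HasWellLabeledTree C Y.card := by
  classical
  set y : Fin Y.card → X := fun k => Y.equivFin.symm k
  have hy : Function.Injective y := Subtype.val_injective.comp Y.equivFin.symm.injective
  have hyY : ∀ k, y k ∈ Y := fun k => (Y.equivFin.symm k).2
  choose L hLC hLY using fun τ : Fin Y.card → Bool =>
    h (y '' {k | τ k = true}) (by rintro _ ⟨k, -, rfl⟩; exact hyY k)
  refine ⟨fun k _ => if hk : k < Y.card then y ⟨k, hk⟩ else Classical.arbitrary X, L, hLC,
    fun τ k => ?_⟩
  simp only [Fin.is_lt, dif_pos, Fin.eta]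
  calc y k ∈ L τ ↔ y k ∈ L τ ∩ Y := by simp [hyY k]
    _ ↔ τ k = true := by rw [hLY, hy.mem_set_image]; rfl

end Trees

section ZeroSets

variable [Field F] {d : ℕ}

theorem mem_zeroSet {f : X → Fin d → F} {a : Fin d → F} {c : X} :
    c ∈ zeroSet f a ↔ a ⬝ᵥ f c = 0 :=
  Iff.rfl

def zeroSetsIn (f : X → Fin d → F) (W : Submodule F (Fin d → F)) : Set (Set X) :=
  {s | ∃ a ∈ W, a ≠ 0 ∧ s = zeroSet f a}

theorem zeroSetsIn_top (f : X → Fin d → F) : zeroSetsIn f ⊤ = zeroSets f := by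
  simp [zeroSetsIn, zeroSets]

theorem lt_finrank_of_hasWellLabeledTree_zeroSetsIn (f : X → Fin d → F) {n : ℕ} :
    ∀ {W : Submodule F (Fin d → F)}, HasWellLabeledTree (zeroSetsIn f W) n → n < finrank F W := by
  induction n with
  | zero =>
    rintro W h
    obtain ⟨-, a, haW, ha0, -⟩ := h.nonempty
    exact Submodule.one_le_finrank_iff.mpr ((Submodule.ne_bot_iff W).mpr ⟨a, haW, ha0⟩)
  | succ n ih =>
    rintro W h
    obtain ⟨x, hx⟩ := h.exists_subtrees
    set W' := W ⊓ LinearMap.ker (dotProductEquiv F (Fin d) (f x))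
    have hin : HasWellLabeledTree (zeroSetsIn f W') n := by
      refine (hx true).mono ?_
      rintro _ ⟨⟨a, haW, ha0, rfl⟩, hxa⟩
      exact ⟨a, ⟨haW, by simpa [mem_zeroSet, dotProduct_comm] using hxa⟩, ha0, rfl⟩
    have hlt : W' < W := by
      obtain ⟨_, ⟨a, haW, -, rfl⟩, hxa⟩ := (hx false).nonempty
      refine SetLike.lt_iff_le_and_exists.mpr ⟨inf_le_left, a, haW, fun haW' => ?_⟩
      exact Bool.false_ne_true (hxa.mp (by simpa [mem_zeroSet, dotProduct_comm] using haW'.2))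
    have hW'W := Submodule.finrank_lt_finrank_of_lt hlt
    have hnW' := ih hin
    omega

theorem not_hasWellLabeledTree_zeroSets (f : X → Fin d → F) {n : ℕ} (hn : d ≤ n) :
    ¬ HasWellLabeledTree (zeroSets f) n := fun h => by
  have := lt_finrank_of_hasWellLabeledTree_zeroSetsIn f (zeroSetsIn_top f ▸ h)
  simp only [finrank_top, finrank_fin_fun] at this
  omega

end ZeroSets

section LinearAlgebra

variable [Field F] {ι : Type*} [Fintype ι] [DecidableEq ι]

theorem exists_dotProduct_eq_of_linearIndependent {v : ι → ι → F} (hv : LinearIndependent F v)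
    (c : ι → F) : ∃ a, ∀ i, a ⬝ᵥ v i = c i := by
  obtain ⟨a, ha⟩ := mulVec_surjective_iff_isUnit.mpr
    (linearIndependent_rows_iff_isUnit (A := Matrix.of v) |>.mp hv) c
  exact ⟨a, fun i => by rw [dotProduct_comm]; exact congrFun ha i⟩

theorem span_range_eq_top_of_linearIndependent_eval {f : X → ι → F}
    (hf : LinearIndependent F fun i x => f x i) : span F (Set.range f) = ⊤ := by
  rw [← Submodule.dualAnnihilator_eq_bot_iff, eq_bot_iff]
  intro φ hφ
  obtain ⟨a, rfl⟩ := (dotProductEquiv F ι).surjective φ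
  have hzero : ∀ x, a ⬝ᵥ f x = 0 := fun x =>
    (mem_dualAnnihilator _).mp hφ _ (subset_span ⟨x, rfl⟩)
  have ha : a = 0 := funext <| Fintype.linearIndependent_iff.mp hf a <| funext fun x => by
    simpa [dotProduct] using hzero x
  simp [ha]

theorem exists_linearIndependent_comp_of_linearIndependent_eval {f : X → ι → F}
    (hf : LinearIndependent F fun i x => f x i) : ∃ x : ι → X, LinearIndependent F (f ∘ x) := by
  obtain ⟨κ, a, -, hspan, hli⟩ := exists_linearIndependent' F f
  rw [span_range_eq_top_of_linearIndependent_eval hf] at hspan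
  let e : κ ≃ ι := (Basis.mk hli hspan.ge).indexEquiv (Pi.basisFun F ι)
  exact ⟨a ∘ e.symm, hli.comp e.symm e.symm.injective⟩

end LinearAlgebra

section Shattering

variable [Field F] {d : ℕ} {f : X → Fin d → F} {x : Fin d → X}

theorem shattersSet_zeroSets_image_compl_singleton (hx : LinearIndependent F (f ∘ x))
    (i₀ : Fin d) : ShattersSet (zeroSets f) (x '' {i₀}ᶜ) := by
  classical
  intro Z hZ
  obtain ⟨a, ha⟩ := exists_dotProduct_eq_of_linearIndependent hx fun i => if x i ∈ Z then 0 else 1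
  have hi₀ : x i₀ ∉ Z := fun h => by simpa [hx.injective.of_comp.eq_iff] using hZ h
  refine ⟨zeroSet f a, ⟨a, fun ha0 => ?_, rfl⟩, ?_⟩
  · simpa [ha0, hi₀] using ha i₀
  · ext y
    simp only [Set.mem_inter_iff, mem_zeroSet]
    constructor
    · rintro ⟨hy, i, -, rfl⟩
      by_contra hi
      simpa [hi] using (ha i).symm.trans hy
    · intro hy
      refine ⟨?_, hZ hy⟩
      obtain ⟨i, -, rfl⟩ := hZ hy
      simpa [hy] using ha i

theorem exists_card_eq_pred_shattersSet_zeroSets (hx : LinearIndependent F (f ∘ x))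
    (hd : 0 < d) : ∃ Y : Finset X, Y.card = d - 1 ∧ ShattersSet (zeroSets f) ↑Y := by
  classical
  let i₀ : Fin d := ⟨0, hd⟩
  refine ⟨(Finset.univ.erase i₀).image x, ?_, ?_⟩
  · rw [Finset.card_image_of_injective _ hx.injective.of_comp,
      Finset.card_erase_of_mem (Finset.mem_univ _), Finset.card_univ, Fintype.card_fin]
  · simpa [← Set.compl_eq_univ_sdiff] using shattersSet_zeroSets_image_compl_singleton hx i₀

end Shattering

end

/-- If the component functions of `f : X → F^d` are linearly independent,
then both the VC-dimension and the Littlestone dimension of `C_f` equal `d - 1`. -/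
theorem statement4 {X F : Type*} [Field F] {d : ℕ} (hd : 0 < d) (f : X → Fin d → F)
    (hf : LinearIndependent F (fun i : Fin d => fun x : X => f x i)) :
    ((∃ Y : Finset X, Y.card = d - 1 ∧ ShattersSet (zeroSets f) ↑Y) ∧
      (∀ Y : Finset X, ShattersSet (zeroSets f) ↑Y → Y.card ≤ d - 1)) ∧
    (HasWellLabeledTree (zeroSets f) (d - 1) ∧
      (∀ n : ℕ, d ≤ n → ¬ HasWellLabeledTree (zeroSets f) n)) := by
  obtain ⟨x, hx⟩ := exists_linearIndependent_comp_of_linearIndependent_eval hf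
  have : Nonempty X := ⟨x ⟨0, hd⟩⟩
  obtain ⟨Y, hYcard, hY⟩ := exists_card_eq_pred_shattersSet_zeroSets hx hd
  have hno_tree : ∀ n, d ≤ n → ¬ HasWellLabeledTree (zeroSets f) n :=
    fun n => not_hasWellLabeledTree_zeroSets f
  refine ⟨⟨⟨Y, hYcard, hY⟩, fun Y' hY' => ?_⟩, hYcard ▸ hY.hasWellLabeledTree_card, hno_tree⟩
  by_contra hlt
  exact hno_tree _ (by omega) hY'.hasWellLabeledTree_card
end

section
/- Let X be a set, F a field, d ≥ 2 an integer, and f : X → F^d. If f(X) is not contained in any finite union of proper linear subspaces of F^d, then C_f = {Z_{f,a} : a ∈ F^d, a ≠ 0} is maximal of VC-dimension d − 1: for every n ≥ d − 1, there exists an n-element subset Y ⊆ X with |{A ∩ Y : A ∈ C_f}| = Σ_{i=0}^{d-1} C(n, i). -/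
/-!
Choose points `T ⊆ X` whose images are in general position: any `d` of them are linearly
independent. This is possible one point at a time, because the spans of the fewer than `d`
images chosen so far are finitely many proper subspaces, which `f(X)` cannot be covered by.
For such `T`, a nonzero functional vanishes on at most `d - 1` points of `T`, and any `d - 1`
points of `T` are the zero set in `T` of some nonzero functional. Taking `Y ⊆ T` with `|Y| = n`
and `|T \ Y| = d - 1`, every `t ⊆ Y` with `|t| ≤ d - 1` can be padded from `T \ Y` to `d - 1`
points, so the traces on `Y` are exactly the subsets of `Y` of size less than `d`.
-/

open Finset Module Submodule

/-- The set of traces of members of `C` on `Y`. -/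
def traces {X : Type*} (C : Set (Set X)) (Y : Set X) : Set (Set X) :=
  (fun A => A ∩ Y) '' C

theorem Finset.card_filter_powerset_card_lt {α : Type*} (s : Finset α) (k : ℕ) :
    #{t ∈ s.powerset | #t < k} = ∑ i ∈ range k, (#s).choose i := by
  rw [card_eq_sum_card_fiberwise (f := card) (t := range k)
    fun t ht => mem_range.mpr (mem_filter.mp ht).2]
  refine sum_congr rfl fun i hi => ?_
  rw [← card_powersetCard]
  congr 1
  ext t
  simp only [mem_filter, mem_powerset, mem_powersetCard, mem_range] at hi ⊢
  constructor
  · rintro ⟨⟨hts, -⟩, rfl⟩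
    exact ⟨hts, rfl⟩
  · rintro ⟨hts, rfl⟩
    exact ⟨⟨hts, hi⟩, rfl⟩

section GeneralPosition

variable {X F V : Type*} [Field F] [AddCommGroup V] [Module F V]

variable (F) in
def InGeneralPosition (f : X → V) (T : Finset X) : Prop :=
  ∀ u ⊆ T, #u ≤ finrank F V → LinearIndepOn F f (u : Set X)

variable (F) in
def hyperplanePreimages (f : X → V) : Set (Set X) :=
  {s | ∃ φ : Dual F V, φ ≠ 0 ∧ s = {c | φ (f c) = 0}}

theorem span_image_ne_top_of_card_lt (f : X → V) {u : Finset X} (hu : #u < finrank F V) :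
    span F (f '' u) ≠ ⊤ := by
  classical
  intro htop
  have hle : (↑(u.image f) : Set V).finrank F ≤ #(u.image f) := finrank_span_finset_le_card _
  rw [Set.finrank, coe_image, htop, finrank_top] at hle
  exact (hle.trans card_image_le).not_gt hu

theorem exists_dual_ne_zero_forall_eq_zero (f : X → V) {u : Finset X} (hu : #u < finrank F V) :
    ∃ φ : Dual F V, φ ≠ 0 ∧ ∀ c ∈ u, φ (f c) = 0 := by
  obtain ⟨φ, hφ, hmap⟩ :=
    exists_dual_map_eq_bot_of_lt_top (span_image_ne_top_of_card_lt f hu).lt_top inferInstance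
  refine ⟨φ, hφ, fun c hc => ?_⟩
  simpa [hmap] using mem_map_of_mem (f := φ) (subset_span (Set.mem_image_of_mem f hc))

theorem exists_forall_notMem_of_not_covered {f : X → V}
    (hcov : ¬ ∃ (k : ℕ) (W : Fin k → Submodule F V), (∀ i, W i ≠ ⊤) ∧ ∀ x, ∃ i, f x ∈ W i)
    (𝒱 : Finset (Submodule F V)) (h𝒱 : ∀ W ∈ 𝒱, W ≠ ⊤) : ∃ x, ∀ W ∈ 𝒱, f x ∉ W := by
  by_contra! h
  refine hcov ⟨#𝒱, fun i => 𝒱.equivFin.symm i, fun i => h𝒱 _ (𝒱.equivFin.symm i).2, fun x => ?_⟩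
  obtain ⟨W, hW, hx⟩ := h x
  exact ⟨𝒱.equivFin ⟨W, hW⟩, by simpa using hx⟩

theorem notMem_of_forall_notMem_span {f : X → V} {T : Finset X} (hV : 2 ≤ finrank F V) {x : X}
    (hx : ∀ u ⊆ T, #u < finrank F V → f x ∉ span F (f '' u)) : x ∉ T := fun hxT =>
  hx {x} (singleton_subset_iff.mpr hxT) (by rw [card_singleton]; omega)
    (subset_span (by simp))

namespace InGeneralPosition

variable {f : X → V} {T : Finset X}

theorem insert [DecidableEq X] (hT : InGeneralPosition F f T) {x : X}
    (hx : ∀ u ⊆ T, #u < finrank F V → f x ∉ span F (f '' u)) :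
    InGeneralPosition F f (insert x T) := by
  intro u hu hcard
  by_cases hxu : x ∈ u
  · have hu' : u.erase x ⊆ T := fun c hc => by
      simpa [(mem_erase.mp hc).1] using hu (mem_of_mem_erase hc)
    have hcard' : #(u.erase x) < finrank F V := by
      rw [card_erase_of_mem hxu]
      have := card_pos.mpr ⟨x, hxu⟩
      omega
    rw [← insert_erase hxu, coe_insert]
    exact (hT _ hu' hcard'.le).insert (hx _ hu' hcard')
  · exact hT u ((subset_insert_iff_of_notMem hxu).mp hu) hcard

theorem card_filter_lt [FiniteDimensional F V] [DecidableEq F] (hT : InGeneralPosition F f T)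
    {φ : Dual F V} (hφ : φ ≠ 0) : #{c ∈ T | φ (f c) = 0} < finrank F V := by
  by_contra! h
  obtain ⟨u, hu, hcard⟩ := exists_subset_card_eq h
  have hspan : span F (f '' u) = ⊤ := by
    rw [Set.image_eq_range]
    exact (hT u (hu.trans (filter_subset _ _)) hcard.le).span_eq_top_of_card_eq_finrank'
      (by simpa using hcard)
  refine hφ (LinearMap.ext_on hspan ?_)
  rintro _ ⟨c, hc, rfl⟩
  exact (mem_filter.mp (hu hc)).2

/-- Pad `t` from `T \ Y` to `finrank F V - 1` points and take `φ` vanishing on them: by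
`card_filter_lt` these are all the zeros of `φ` in `T`, and exactly `t` of them lie in `Y`. -/
theorem exists_dual_inter_eq [FiniteDimensional F V] [DecidableEq X] (hT : InGeneralPosition F f T)
    {Y t : Finset X} (hYT : Y ⊆ T) (htY : t ⊆ Y) (ht : #t < finrank F V)
    (hTY : finrank F V - 1 ≤ #(T \ Y)) :
    ∃ φ : Dual F V, φ ≠ 0 ∧ {c | φ (f c) = 0} ∩ Y = t := by
  classical
  have hdisj : Disjoint t (T \ Y) := disjoint_left.mpr fun c hc hc' => (mem_sdiff.mp hc').2 (htY hc)
  obtain ⟨u, htu, hu, hucard⟩ := exists_subsuperset_card_eq (n := finrank F V - 1)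
    (subset_union_left : t ⊆ t ∪ (T \ Y)) (by omega) (by rw [card_union_of_disjoint hdisj]; omega)
  have huT : u ⊆ T := hu.trans (union_subset (htY.trans hYT) sdiff_subset)
  obtain ⟨φ, hφ, hφu⟩ := exists_dual_ne_zero_forall_eq_zero (F := F) f (u := u) (by omega)
  have hzero : {c ∈ T | φ (f c) = 0} = u := (eq_of_subset_of_card_le
    (fun c hc => mem_filter.mpr ⟨huT hc, hφu c hc⟩) (by have := hT.card_filter_lt hφ; omega)).symm
  refine ⟨φ, hφ, Set.ext fun c => ⟨fun ⟨hc, hcY⟩ => ?_, fun hc => ⟨hφu c (htu hc), htY hc⟩⟩⟩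
  have hcu : c ∈ u := hzero ▸ mem_filter.mpr ⟨hYT hcY, hc⟩
  rcases mem_union.mp (hu hcu) with hct | hcTY
  · exact hct
  · exact absurd hcY (mem_sdiff.mp hcTY).2

theorem traces_hyperplanePreimages [FiniteDimensional F V] [DecidableEq X] (hT : InGeneralPosition F f T)
    {Y : Finset X} (hYT : Y ⊆ T) (hTY : finrank F V - 1 ≤ #(T \ Y)) :
    traces (hyperplanePreimages F f) Y =
      (fun t : Finset X => (t : Set X)) '' ↑{t ∈ Y.powerset | #t < finrank F V} := by
  classical
  ext A
  simp only [traces, hyperplanePreimages, Set.mem_image, Set.mem_ofPred_eq, coe_filter,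
    mem_powerset]
  constructor
  · rintro ⟨_, ⟨φ, hφ, rfl⟩, rfl⟩
    refine ⟨{c ∈ Y | φ (f c) = 0}, ⟨filter_subset _ _, ?_⟩, by ext; simp [and_comm]⟩
    exact (card_le_card (filter_subset_filter _ hYT)).trans_lt (hT.card_filter_lt hφ)
  · rintro ⟨t, ⟨htY, ht⟩, rfl⟩
    obtain ⟨φ, hφ, hφt⟩ := hT.exists_dual_inter_eq hYT htY ht hTY
    exact ⟨_, ⟨φ, hφ, rfl⟩, hφt⟩

end InGeneralPosition

theorem exists_card_eq_inGeneralPosition (hV : 2 ≤ finrank F V) (f : X → V)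
    (havoid : ∀ 𝒱 : Finset (Submodule F V), (∀ W ∈ 𝒱, W ≠ ⊤) → ∃ x, ∀ W ∈ 𝒱, f x ∉ W)
    (N : ℕ) : ∃ T : Finset X, #T = N ∧ InGeneralPosition F f T := by
  classical
  induction N with
  | zero => exact ⟨∅, rfl, fun u hu _ => by simp [subset_empty.mp hu]⟩
  | succ N ih =>
    obtain ⟨T, rfl, hT⟩ := ih
    obtain ⟨x, hx⟩ := havoid
      ({u ∈ T.powerset | #u < finrank F V}.image fun u : Finset X => span F (f '' u))
      (by simp only [mem_image, mem_filter, mem_powerset]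
          rintro _ ⟨u, ⟨-, hu⟩, rfl⟩
          exact span_image_ne_top_of_card_lt f hu)
    have hx' : ∀ u ⊆ T, #u < finrank F V → f x ∉ span F (f '' u) := fun u hu hcard =>
      hx _ (mem_image_of_mem _ (by simp [hu, hcard]))
    exact ⟨insert x T, card_insert_of_notMem (notMem_of_forall_notMem_span hV hx'),
      hT.insert hx'⟩

end GeneralPosition

theorem zeroSets_eq_hyperplanePreimages {X F : Type*} [Field F] {d : ℕ} (f : X → Fin d → F) :
    zeroSets f = hyperplanePreimages F f := by
  ext s
  constructor
  · rintro ⟨a, ha, rfl⟩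
    exact ⟨dotProductEquiv F (Fin d) a, by simpa using ha, rfl⟩
  · rintro ⟨φ, hφ, rfl⟩
    refine ⟨(dotProductEquiv F (Fin d)).symm φ, by simpa using hφ, ?_⟩
    conv_lhs => rw [← (dotProductEquiv F (Fin d)).apply_symm_apply φ]
    rfl

/-- If the image of `f : X → F^d` (`d ≥ 2`) is not contained in any finite
union of proper linear subspaces of `F^d`, then `C_f` is maximal of VC-dimension `d - 1`:
for every `n ≥ d - 1` there is an `n`-element subset of `X` on which `C_f` has exactly
`∑_{i=0}^{d-1} (n choose i)` traces. -/
theorem statement8 {X F : Type*} [Field F] {d : ℕ} (hd : 2 ≤ d) (f : X → Fin d → F)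
    (hcov : ¬ ∃ (k : ℕ) (V : Fin k → Submodule F (Fin d → F)),
      (∀ i, V i ≠ ⊤) ∧ ∀ x : X, ∃ i, f x ∈ V i) :
    ∀ n : ℕ, d - 1 ≤ n → ∃ Y : Finset X, Y.card = n ∧
      (traces (zeroSets f) ↑Y).ncard = ∑ i ∈ Finset.range d, n.choose i := by
  classical
  intro n hn
  have hrank : finrank F (Fin d → F) = d := finrank_fin_fun F
  obtain ⟨T, hTcard, hT⟩ := exists_card_eq_inGeneralPosition (by rwa [hrank]) f
    (exists_forall_notMem_of_not_covered hcov) (n + (d - 1))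
  obtain ⟨Y, hYT, hYcard⟩ := exists_subset_card_eq (show n ≤ #T by omega)
  refine ⟨Y, hYcard, ?_⟩
  rw [zeroSets_eq_hyperplanePreimages,
    hT.traces_hyperplanePreimages hYT (by rw [card_sdiff_of_subset hYT]; omega),
    Set.ncard_image_of_injective _ coe_injective, Set.ncard_coe_finset,
    card_filter_powerset_card_lt, hYcard, hrank]
end
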